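/- χ₁₈ vanishes to order at least 6 along the locus of decomposable period matrices: for every τ ∈ ℍ₃ with τ₁₃ = τ₂₃ = 0 (the image of ℍ₂×ℍ₁ in ℍ₃) and all nonnegative integers p, q with p + q ≤ 5, the partial derivative ∂^{p+q}χ₁₈/∂τ₁₃^p∂τ₂₃^q vanishes at τ. -/

import Mathlib

open scoped BigOperators
open Complex Matrix Filter

noncomputable section

attribute [local instance] Matrix.normedAddCommGroup Matrix.normedSpace

/-- The Siegel upper half space of degree `g`: complex symmetric `g × g` matrices
whose imaginary part is positive definite. -/
def Hg (g : ℕ) : Set (Matrix (Fin g) (Fin g) ℂ) :=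
  {τ | τ.IsSymm ∧ (Matrix.of fun i j => (τ i j).im).PosDef}

/-- Theta function with (integer row vector) characteristics `[a; b]`. -/
def thetaFn (g : ℕ) (a b : Fin g → ℤ) (τ : Matrix (Fin g) (Fin g) ℂ)
    (z : Fin g → ℂ) : ℂ :=
  ∑' l : Fin g → ℤ,
    Complex.exp ((Real.pi : ℂ) * Complex.I *
        ∑ i, ∑ j, ((l i : ℂ) + (a i : ℂ) / 2) * τ i j * ((l j : ℂ) + (a j : ℂ) / 2)) *
    Complex.exp (2 * (Real.pi : ℂ) * Complex.I *
        ∑ i, ((l i : ℂ) + (a i : ℂ) / 2) * (z i + (b i : ℂ) / 2))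

/-- Theta constant with characteristics `[a; b]`. -/
def thetaNull (g : ℕ) (a b : Fin g → ℤ) (τ : Matrix (Fin g) (Fin g) ℂ) : ℂ :=
  thetaFn g a b τ 0

/-- The block matrix `[[τ', zᵀ], [z, t]]` built from `τ' ∈ ℍ₃`, a row vector
`z ∈ ℂ³` and `t ∈ ℍ₁`. -/
def blk (τ' : Matrix (Fin 3) (Fin 3) ℂ) (z : Fin 3 → ℂ) (t : ℂ) :
    Matrix (Fin 4) (Fin 4) ℂ :=
  Matrix.of fun i j =>
    if hi : (i : ℕ) < 3 then
      if hj : (j : ℕ) < 3 then τ' ⟨i, hi⟩ ⟨j, hj⟩ else z ⟨i, hi⟩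
    else
      if hj : (j : ℕ) < 3 then z ⟨j, hj⟩ else t

/-- `R_{μν}`, a product of eight genus-4 theta constants. -/
def Rmn (μ ν : ℤ) (τ : Matrix (Fin 4) (Fin 4) ℂ) : ℂ :=
  ∏ α : Fin 2, ∏ β : Fin 2, ∏ γ : Fin 2,
    thetaNull 4 ![μ, 0, 0, 0] ![ν, (α : ℕ), (β : ℕ), (γ : ℕ)] τ

/-- The Schottky form `J₈` on `ℍ₄`. -/
def J8 (τ : Matrix (Fin 4) (Fin 4) ℂ) : ℂ :=
  (Rmn 0 0 τ ^ 2 + Rmn 0 1 τ ^ 2 + Rmn 1 0 τ ^ 2 -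
      2 * (Rmn 0 0 τ * Rmn 0 1 τ + Rmn 0 0 τ * Rmn 1 0 τ + Rmn 0 1 τ * Rmn 1 0 τ)) / 2 ^ 16

/-- `r_{μν}`, a product of four genus-3 theta constants. -/
def rmn (μ ν : ℤ) (τ : Matrix (Fin 3) (Fin 3) ℂ) : ℂ :=
  ∏ α : Fin 2, ∏ β : Fin 2, thetaNull 3 ![μ, 0, 0] ![ν, (α : ℕ), (β : ℕ)] τ

/-- `s_{μν}(τ, z)`, a sum of four squares of quotients of theta functions. -/
def smn (μ ν : ℤ) (τ : Matrix (Fin 3) (Fin 3) ℂ) (z : Fin 3 → ℂ) : ℂ :=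
  ∑ α : Fin 2, ∑ β : Fin 2,
    (thetaFn 3 ![μ, 0, 0] ![ν, (α : ℕ), (β : ℕ)] τ z /
        thetaNull 3 ![μ, 0, 0] ![ν, (α : ℕ), (β : ℕ)] τ) ^ 2

/-- Partial derivative of a function of `z ∈ ℂ³` in the `i`-th coordinate. -/
def pd (i : Fin 3) (f : (Fin 3 → ℂ) → ℂ) : (Fin 3 → ℂ) → ℂ :=
  fun z => deriv (fun w : ℂ => f (Function.update z i w)) (z i)

/-- Iterated partial derivative `∂^{I₀+I₁+I₂}/∂z₁^{I₀}∂z₂^{I₁}∂z₃^{I₂}`. -/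
def pdMulti (I : Fin 3 → ℕ) (f : (Fin 3 → ℂ) → ℂ) : (Fin 3 → ℂ) → ℂ :=
  (pd 0)^[I 0] <| (pd 1)^[I 1] <| (pd 2)^[I 2] f

/-- The coordinate `c_I` of `χ_{4,0,8}`, defined as the limit
`lim_{t → ∞} e^{2πt} ∂⁴_I J₈([[τ, zᵀ],[z, it]])|_{z=0}`. -/
def cI (I : Fin 3 → ℕ) (τ : Matrix (Fin 3) (Fin 3) ℂ) : ℂ :=
  limUnder Filter.atTop fun t : ℝ =>
    (Real.exp (2 * Real.pi * t) : ℂ) *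
      pdMulti I (fun z => J8 (blk τ z (Complex.I * (t : ℂ)))) 0

/-- `χ_{4,0,8}(τ)` as a quartic form in `x = (x₁, x₂, x₃)`. -/
def chi408 (τ : Matrix (Fin 3) (Fin 3) ℂ) (x : Fin 3 → ℂ) : ℂ :=
  ∑ I ∈ Finset.Nat.antidiagonalTuple 3 4,
    cI I τ * (∏ i, x i ^ I i) / ∏ i, ((I i).factorial : ℂ)

/-- `χ₁₈`, the product of the 36 even theta constants of genus 3. -/
def chi18 (τ : Matrix (Fin 3) (Fin 3) ℂ) : ℂ :=
  ∏ a : Fin 3 → Fin 2, ∏ b : Fin 3 → Fin 2,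
    if Even (∑ i, (a i : ℕ) * (b i : ℕ)) then
      thetaNull 3 (fun i => ((a i : ℕ) : ℤ)) (fun i => ((b i : ℕ) : ℤ)) τ
    else 1

/-- An element of `Sp(6, ℤ)` in block form `[[a, b], [c, d]]`, i.e. four integer
`3 × 3` matrices satisfying the standard symplectic relations. -/
structure Sp6 : Type where
  a : Matrix (Fin 3) (Fin 3) ℤ
  b : Matrix (Fin 3) (Fin 3) ℤ
  c : Matrix (Fin 3) (Fin 3) ℤ
  d : Matrix (Fin 3) (Fin 3) ℤ
  hac : aᵀ * c = cᵀ * a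
  hbd : bᵀ * d = dᵀ * b
  had : aᵀ * d - cᵀ * b = 1

/-- Integer matrix viewed as a complex matrix. -/
def mc (m : Matrix (Fin 3) (Fin 3) ℤ) : Matrix (Fin 3) (Fin 3) ℂ :=
  m.map fun x => (x : ℂ)

/-- The automorphy factor `cτ + d`. -/
def jmat (γ : Sp6) (τ : Matrix (Fin 3) (Fin 3) ℂ) : Matrix (Fin 3) (Fin 3) ℂ :=
  mc γ.c * τ + mc γ.d

/-- The action `γ · τ = (aτ + b)(cτ + d)⁻¹` of `Sp(6, ℤ)` on `ℍ₃`. -/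
def spAct (γ : Sp6) (τ : Matrix (Fin 3) (Fin 3) ℂ) : Matrix (Fin 3) (Fin 3) ℂ :=
  (mc γ.a * τ + mc γ.b) * (jmat γ τ)⁻¹

/-- The matrix `E₃₃` with `(3,3)` entry `1` and all other entries `0`. -/
def E33 : Matrix (Fin 3) (Fin 3) ℂ := Matrix.single 2 2 1

/-- Derivative of a function on `ℍ₃` with respect to the symmetric coordinate `τ_{ab}`. -/
def mdOp (a b : Fin 3) (f : Matrix (Fin 3) (Fin 3) ℂ → ℂ) :
    Matrix (Fin 3) (Fin 3) ℂ → ℂ :=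
  fun τ => deriv (fun w : ℂ =>
    f (τ + w • (Matrix.single a b (1 : ℂ) + Matrix.single b a 1))) 0

/-- Multi-indices of ternary-quartic monomials: `I : Fin 3 → ℕ` with `∑ I = 4`. -/
abbrev QIdx : Type := {I : Fin 3 → ℕ // I ∈ Finset.Nat.antidiagonalTuple 3 4}

/-- Multi-indices of ternary-quadratic monomials. -/
abbrev C2Idx : Type := {I : Fin 3 → ℕ // I ∈ Finset.Nat.antidiagonalTuple 3 2}

/-- The ternary quartic with (normalized) coefficient vector `aa`, evaluated at `v`. -/
def quarticEval (aa : QIdx → ℂ) (v : Fin 3 → ℂ) : ℂ :=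
  ∑ I : QIdx, ((Nat.factorial 4 : ℂ) / ∏ i, ((I.1 i).factorial : ℂ)) * aa I * ∏ i, v i ^ I.1 i

/-- A ternary quadratic form with coefficient vector `bb`, evaluated at `v`. -/
def quadEval (bb : C2Idx → ℂ) (v : Fin 3 → ℂ) : ℂ :=
  ∑ I : C2Idx, bb I * ∏ i, v i ^ I.1 i

/-- The second exterior power of a `3 × 3` matrix in the basis
`e₂∧e₃, e₃∧e₁, e₁∧e₂`. -/
def lam2 (M : Matrix (Fin 3) (Fin 3) ℂ) : Matrix (Fin 3) (Fin 3) ℂ :=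
  Matrix.of fun i j =>
    M (i + 1) (j + 1) * M (i + 2) (j + 2) - M (i + 1) (j + 2) * M (i + 2) (j + 1)

/-- Variables of a concomitant: the 15 coefficients `a_I`, the variables `x`, and `x̂`. -/
abbrev ConcVar : Type := QIdx ⊕ (Fin 3 ⊕ Fin 3)

/-- Evaluation of a concomitant (as polynomial) at coefficients `aa` and vectors `x`, `x̂`. -/
def evalConc (c : MvPolynomial ConcVar ℂ) (aa : QIdx → ℂ) (x xh : Fin 3 → ℂ) : ℂ :=
  MvPolynomial.eval (Sum.elim aa (Sum.elim x xh)) c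

/-- `c` is a concomitant of ternary quartics of degree `d` and bidegree `(i, j)`:
it is trihomogeneous of degrees `d`, `i`, `j` in the coefficients, in `x`, and in `x̂`,
and it is `SL(3, ℂ)`-equivariant. -/
structure IsConcomitant (c : MvPolynomial ConcVar ℂ) (d i j : ℕ) : Prop where
  homA : c.IsWeightedHomogeneous (Sum.elim (fun _ => 1) fun _ => 0) d
  homX : c.IsWeightedHomogeneous (Sum.elim (fun _ => 0) (Sum.elim (fun _ => 1) fun _ => 0)) i
  homXh : c.IsWeightedHomogeneous (Sum.elim (fun _ => 0) (Sum.elim (fun _ => 0) fun _ => 1)) j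
  equivar : ∀ A : Matrix (Fin 3) (Fin 3) ℂ, A.det = 1 →
    ∀ aa aa' : QIdx → ℂ,
      (∀ v : Fin 3 → ℂ, quarticEval aa' v = quarticEval aa (Aᵀ *ᵥ v)) →
      ∀ x xh : Fin 3 → ℂ,
        evalConc c aa' x xh = evalConc c aa (Aᵀ *ᵥ x) (lam2 Aᵀ *ᵥ xh)

/-- `c` vanishes to order `≥ m` along the locus of double conics: for every quartic `f`
(with coefficients `aa`) and every quadratic `g` (with coefficients `bb`, and `sq` the
coefficient vector of `g²`), `c` evaluated at the coefficients of `t·f + g²` is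
divisible by `t^m` (all `t`-derivatives of order `< m` vanish at `t = 0`). -/
def VanishesDC (c : MvPolynomial ConcVar ℂ) (m : ℕ) : Prop :=
  ∀ (aa : QIdx → ℂ) (bb : C2Idx → ℂ) (sq : QIdx → ℂ),
    (∀ v : Fin 3 → ℂ, quarticEval sq v = quadEval bb v ^ 2) →
    ∀ x xh : Fin 3 → ℂ, ∀ k : ℕ, k < m →
      iteratedDeriv k (fun t : ℂ => evalConc c (fun I => t * aa I + sq I) x xh) 0 = 0

/-- Bihomogeneous polynomials in `x` and `x̂`. -/
abbrev BiPoly : Type := MvPolynomial (Fin 3 ⊕ Fin 3) ℂ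

def evalBi (P : BiPoly) (x xh : Fin 3 → ℂ) : ℂ :=
  MvPolynomial.eval (Sum.elim x xh) P

/-- `P` is bihomogeneous of bidegree `(i, j)` in `(x, x̂)`. -/
def IsBihom (P : BiPoly) (i j : ℕ) : Prop :=
  P.IsWeightedHomogeneous (Sum.elim (fun _ => 1) fun _ => 0) i ∧
  P.IsWeightedHomogeneous (Sum.elim (fun _ => 0) fun _ => 1) j

/-- A polynomial-valued map is holomorphic on `ℍ₃` if all its coefficients are. -/
def HoloPolyMap (H : Matrix (Fin 3) (Fin 3) ℂ → BiPoly) : Prop :=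
  ∀ m : (Fin 3 ⊕ Fin 3) →₀ ℕ,
    DifferentiableOn ℂ (fun τ => MvPolynomial.coeff m (H τ)) (Hg 3)

/-- The coefficient vector of the quartic `χ_{4,0,8}(τ)`, i.e. `a_I = c_I(τ)/4!`. -/
def chiCoef (τ : Matrix (Fin 3) (Fin 3) ℂ) : QIdx → ℂ :=
  fun I => cI I.1 τ / (Nat.factorial 4 : ℂ)

/-- A Siegel modular form of degree 3 and weight `(i, j, k)`: a holomorphic map
from `ℍ₃` to the bihomogeneous polynomials of bidegree `(i, j)` with the standard
transformation law under `Sp(6, ℤ)`. -/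
def IsSiegelMF (F : Matrix (Fin 3) (Fin 3) ℂ → BiPoly) (i j : ℕ) (k : ℤ) : Prop :=
  HoloPolyMap F ∧ (∀ τ ∈ Hg 3, IsBihom (F τ) i j) ∧
  ∀ γ : Sp6, ∀ τ ∈ Hg 3, ∀ x xh : Fin 3 → ℂ,
    evalBi (F (spAct γ τ)) x xh =
      (jmat γ τ).det ^ k *
        evalBi (F τ) ((jmat γ τ)ᵀ *ᵥ x) (lam2 (jmat γ τ)ᵀ *ᵥ xh)

/-- `F` vanishes to order `≥ n` along the divisor `D` at infinity. -/
def VanishesAtInfinity (F : Matrix (Fin 3) (Fin 3) ℂ → BiPoly) (n : ℤ) : Prop :=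
  ∀ τ ∈ Hg 3, ∃ B : ℝ, ∀ t : ℝ, 0 ≤ t → ∀ m : (Fin 3 ⊕ Fin 3) →₀ ℕ,
    ‖MvPolynomial.coeff m (F (τ + (Complex.I * (t : ℂ)) • E33))‖ *
      Real.exp (2 * Real.pi * n * t) ≤ B

/-- `χ_{4,0,8}(τ)` as a bihomogeneous polynomial of bidegree `(4, 0)`. -/
def chi408Poly (τ : Matrix (Fin 3) (Fin 3) ℂ) : BiPoly :=
  ∑ I : QIdx,
    MvPolynomial.C (cI I.1 τ / ∏ i, ((I.1 i).factorial : ℂ)) *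
      ∏ i, (MvPolynomial.X (Sum.inl i) : BiPoly) ^ I.1 i

/-!
On the slice `τ + u S₁₃ + v S₂₃` (with `S_ij` the symmetric unit matrix of the coordinate `τ_ij`),
`χ₁₈` is the product of the 36 even theta constants, each a holomorphic function of `(u, v)`
whose partial derivatives are again theta-type series, differentiated termwise: the Gaussian
decay coming from `Im τ > 0` makes all of them converge locally uniformly.

When `τ₁₃ = τ₂₃ = 0`, the six even characteristics whose third column is `[1; 1]` give theta
constants vanishing at `u = v = 0`: the reflection `l₃ + 1/2 ↦ -(l₃ + 1/2)` preserves the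
quadratic form and changes the sign of every term. Expanding a derivative of order `p + q < 6` of
the product by the Leibniz rule, every summand leaves one of these six factors underived, so it
vanishes at the origin.
-/

open scoped Real

def symmUnit {g : ℕ} (i j : Fin g) : Matrix (Fin g) (Fin g) ℂ := single i j 1 + single j i 1

lemma mdOp_iterate_apply (a b : Fin 3) (n : ℕ) (f : Matrix (Fin 3) (Fin 3) ℂ → ℂ)
    (σ : Matrix (Fin 3) (Fin 3) ℂ) :
    (mdOp a b)^[n] f σ = iteratedDeriv n (fun w : ℂ => f (σ + w • symmUnit a b)) 0 := by
  induction n generalizing σ with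
  | zero => simp
  | succ n ih =>
    have shift (w : ℂ) : (mdOp a b)^[n] f (σ + w • symmUnit a b) =
        iteratedDeriv n (fun w' : ℂ => f (σ + w' • symmUnit a b)) w := by
      rw [ih]
      simpa only [add_zero, add_smul, add_assoc] using
        congrFun (iteratedDeriv_comp_const_add n (fun w' : ℂ => f (σ + w' • symmUnit a b)) w) 0
    rw [Function.iterate_succ_apply', iteratedDeriv_succ]
    exact congrArg (deriv · 0) (funext shift)

section Towers

open Finset

universe u

structure IsDerivTower (f : ℕ → ℕ → ℂ → ℂ → ℂ) (r : ℝ) : Prop where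
  hasDerivAt_fst : ∀ m n u v, ‖u‖ < r → ‖v‖ < r →
    HasDerivAt (fun w => f m n w v) (f (m + 1) n u v) u
  hasDerivAt_snd : ∀ m n u v, ‖u‖ < r → ‖v‖ < r →
    HasDerivAt (fun w => f m n u w) (f m (n + 1) u v) v

variable {ι : Type u} [DecidableEq ι]

lemma hasDerivAt_finset_prod_of_tower {𝕜 : Type*} [NontriviallyNormedField 𝕜] {s : Finset ι}
    {f : ι → ℕ → 𝕜 → 𝕜} {x : 𝕜} (hf : ∀ i ∈ s, ∀ m, HasDerivAt (f i m) (f i (m + 1) x) x)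
    (M : ι → ℕ) :
    HasDerivAt (fun w => ∏ i ∈ s, f i (M i) w)
      (∑ j ∈ s, ∏ i ∈ s, f i (Function.update M j (M j + 1) i) x) x := by
  refine (HasDerivAt.fun_finsetProd fun i hi => hf i hi (M i)).congr_deriv
    (sum_congr rfl fun j hj => ?_)
  rw [← mul_prod_erase s (fun i => f i (Function.update M j (M j + 1) i) x) hj,
    smul_eq_mul, mul_comm, Function.update_self]
  congr 1
  exact prod_congr rfl fun i hi => by rw [Function.update_of_ne (ne_of_mem_erase hi)]

lemma lt_card_filter_of_add_one_lt {p q : ι → Prop} [DecidablePred p] [DecidablePred q]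
    {Z : Finset ι} (j : ι) (h : ∀ i, i ≠ j → p i → q i) {n : ℕ} (hn : n + 1 < #(Z.filter p)) :
    n < #(Z.filter q) := by
  suffices #(Z.filter p) ≤ #(Z.filter q) + 1 by omega
  refine (card_le_card fun i hi => ?_).trans (card_insert_le j _)
  rw [mem_filter] at hi
  rw [mem_insert, mem_filter]
  by_cases hij : i = j
  · exact Or.inl hij
  · exact Or.inr ⟨hi.1, h i hij hi.2⟩

variable {s Z : Finset ι} {f : ι → ℕ → ℕ → ℂ → ℂ → ℂ} {r : ℝ}

lemma hasDerivAt_sum_prod_fst {κ : Type*} (hf : ∀ i ∈ s, IsDerivTower (f i) r) (t : Finset κ)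
    (c : κ → ℂ) (M N : κ → ι → ℕ) {u v : ℂ} (hu : ‖u‖ < r) (hv : ‖v‖ < r) :
    HasDerivAt (fun w => ∑ k ∈ t, c k * ∏ i ∈ s, f i (M k i) (N k i) w v)
      (∑ kj ∈ t ×ˢ s, c kj.1 *
        ∏ i ∈ s, f i (Function.update (M kj.1) kj.2 (M kj.1 kj.2 + 1) i) (N kj.1 i) u v) u := by
  rw [sum_product]
  exact HasDerivAt.fun_sum fun k _ => ((hasDerivAt_finset_prod_of_tower
    (f := fun i m w => f i m (N k i) w v) (fun i hi m => (hf i hi).hasDerivAt_fst _ _ _ _ hu hv)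
    (M k)).const_mul (c k)).congr_deriv (mul_sum _ _ _)

lemma hasDerivAt_sum_prod_snd {κ : Type*} (hf : ∀ i ∈ s, IsDerivTower (f i) r) (t : Finset κ)
    (c : κ → ℂ) (M N : κ → ι → ℕ) {u v : ℂ} (hu : ‖u‖ < r) (hv : ‖v‖ < r) :
    HasDerivAt (fun w => ∑ k ∈ t, c k * ∏ i ∈ s, f i (M k i) (N k i) u w)
      (∑ kj ∈ t ×ˢ s, c kj.1 *
        ∏ i ∈ s, f i (M kj.1 i) (Function.update (N kj.1) kj.2 (N kj.1 kj.2 + 1) i) u v) v := by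
  rw [sum_product]
  exact HasDerivAt.fun_sum fun k _ => ((hasDerivAt_finset_prod_of_tower
    (f := fun i n w => f i (M k i) n u w) (fun i hi n => (hf i hi).hasDerivAt_snd _ _ _ _ hu hv)
    (N k)).const_mul (c k)).congr_deriv (mul_sum _ _ _)

/-- Each partial derivative differentiates one factor of each product, so it uses up at most one
of the underived factors that vanish at the origin. -/
theorem iteratedDeriv_iteratedDeriv_sum_prod_eq_zero (hf : ∀ i ∈ s, IsDerivTower (f i) r)
    (hr : 0 < r) (hZs : Z ⊆ s) (hZ : ∀ i ∈ Z, f i 0 0 0 0 = 0) (p q : ℕ) {κ : Type u}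
    (t : Finset κ) (c : κ → ℂ) (M N : κ → ι → ℕ)
    (hMN : ∀ k ∈ t, p + q < #(Z.filter fun i => M k i = 0 ∧ N k i = 0)) :
    iteratedDeriv p (fun u => iteratedDeriv q
      (fun v => ∑ k ∈ t, c k * ∏ i ∈ s, f i (M k i) (N k i) u v) 0) 0 = 0 := by
  induction h : p + q generalizing p q κ with
  | zero =>
    obtain ⟨rfl, rfl⟩ : p = 0 ∧ q = 0 := by omega
    simp only [iteratedDeriv_zero]
    refine sum_eq_zero fun k hk => ?_
    obtain ⟨i, hi⟩ := card_pos.mp (h ▸ hMN k hk)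
    rw [mem_filter] at hi
    rw [prod_eq_zero (hZs hi.1) (by rw [hi.2.1, hi.2.2]; exact hZ i hi.1), mul_zero]
  | succ n ih =>
    have h0 : ‖(0 : ℂ)‖ < r := by simpa using hr
    have hball : ∀ᶠ w in nhds (0 : ℂ), ‖w‖ < r :=
      (continuous_norm.tendsto 0).eventually (gt_mem_nhds h0)
    cases q with
    | zero =>
      obtain rfl : p = n + 1 := by omega
      simp only [iteratedDeriv_zero]
      rw [iteratedDeriv_succ', Filter.EventuallyEq.iteratedDeriv_eq n (hball.mono fun u hu =>
        (hasDerivAt_sum_prod_fst hf t c M N hu h0).deriv)]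
      simpa using ih n 0 (t ×ˢ s) (fun kj => c kj.1)
        (fun kj => Function.update (M kj.1) kj.2 (M kj.1 kj.2 + 1)) (fun kj => N kj.1)
        (fun kj hkj => lt_card_filter_of_add_one_lt kj.2
          (fun i hi h => by rwa [Function.update_of_ne hi]) (hMN kj.1 (mem_product.mp hkj).1))
        (by omega)
    | succ q =>
      refine (Filter.EventuallyEq.iteratedDeriv_eq p ?_).trans <| ih p q (t ×ˢ s)
        (fun kj => c kj.1) (fun kj => M kj.1)
        (fun kj => Function.update (N kj.1) kj.2 (N kj.1 kj.2 + 1))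
        (fun kj hkj => lt_card_filter_of_add_one_lt (n := p + q) kj.2
          (fun i hi h => by rwa [Function.update_of_ne hi]) (hMN kj.1 (mem_product.mp hkj).1))
        (by omega)
      filter_upwards [hball] with u hu
      rw [iteratedDeriv_succ']
      exact Filter.EventuallyEq.iteratedDeriv_eq q (hball.mono fun v hv =>
        (hasDerivAt_sum_prod_snd hf t c M N hu hv).deriv)

theorem iteratedDeriv_iteratedDeriv_prod_eq_zero (hf : ∀ i ∈ s, IsDerivTower (f i) r)
    (hr : 0 < r) (hZs : Z ⊆ s) (hZ : ∀ i ∈ Z, f i 0 0 0 0 = 0) {p q : ℕ} (hpq : p + q < #Z) :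
    iteratedDeriv p (fun u => iteratedDeriv q (fun v => ∏ i ∈ s, f i 0 0 u v) 0) 0 = 0 := by
  simpa using iteratedDeriv_iteratedDeriv_sum_prod_eq_zero hf hr hZs hZ p q
    (univ : Finset PUnit.{u + 1}) 1 0 0 fun _ _ => by simpa using hpq

end Towers

section GaussianSums

lemma pow_mul_exp_neg_mul_le {d X : ℝ} (hd : 0 < d) (hX : 0 ≤ X) (k : ℕ) :
    X ^ k * rexp (-(d * X)) ≤ k.factorial * (2 / d) ^ k * rexp (-(d / 2 * X)) := by
  have hpow : X ^ k ≤ k.factorial * (2 / d) ^ k * rexp (d / 2 * X) := by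
    have h := Real.pow_div_factorial_le_exp (d / 2 * X) (by positivity) k
    rw [div_le_iff₀ (by positivity), mul_pow] at h
    calc X ^ k = (2 / d) ^ k * ((d / 2) ^ k * X ^ k) := by
          rw [← mul_assoc, ← mul_pow, show 2 / d * (d / 2) = 1 by field_simp, one_pow, one_mul]
      _ ≤ (2 / d) ^ k * (rexp (d / 2 * X) * k.factorial) := by gcongr
      _ = _ := by ring
  calc X ^ k * rexp (-(d * X))
      ≤ k.factorial * (2 / d) ^ k * rexp (d / 2 * X) * rexp (-(d * X)) := by gcongr
    _ = k.factorial * (2 / d) ^ k * rexp (-(d / 2 * X)) := by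
      rw [mul_assoc, ← Real.exp_add]; ring_nf

lemma summable_exp_neg_mul_add_sq {d : ℝ} (hd : 0 < d) (s : ℝ) :
    Summable fun n : ℤ => rexp (-(d * (n + s) ^ 2)) := by
  refine (summable_pow_mul_jacobiTheta₂_term_bound (d * |s| / π) (T := d / π) (by positivity)
    0).of_nonneg_of_le (fun _ => (Real.exp_pos _).le) fun n => ?_
  rw [pow_zero, one_mul, Real.exp_le_exp, Int.cast_abs]
  have hsn : -(|s| * |(n : ℝ)|) ≤ s * n := by rw [← abs_mul]; exact neg_abs_le _
  field_simp
  nlinarith [sq_nonneg s, Real.pi_pos]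

lemma summable_prod_apply_of_nonneg {α : Type*} {g : ℕ} {f : Fin g → α → ℝ}
    (hf₀ : ∀ i a, 0 ≤ f i a) (hf : ∀ i, Summable (f i)) :
    Summable fun l : Fin g → α => ∏ i, f i (l i) := by
  induction g with
  | zero => exact Summable.of_finite
  | succ g ih =>
    rw [← (Fin.consEquiv fun _ => α).summable_iff]
    simpa [Function.comp_def, Fin.prod_univ_succ] using
      (hf 0).mul_of_nonneg (ih (fun i => hf₀ i.succ) fun i => hf i.succ) (hf₀ 0)
        fun l => Finset.prod_nonneg fun i _ => hf₀ i.succ (l i)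

theorem summable_pow_mul_exp_neg_mul_sum_sq {g : ℕ} (s : Fin g → ℝ) {d : ℝ} (hd : 0 < d)
    (k : ℕ) :
    Summable fun l : Fin g → ℤ =>
      (∑ i, (l i + s i) ^ 2) ^ k * rexp (-(d * ∑ i, (l i + s i) ^ 2)) := by
  refine Summable.of_nonneg_of_le (fun l => by positivity)
    (fun l => pow_mul_exp_neg_mul_le hd (by positivity) k) ?_
  simp_rw [Finset.mul_sum, ← Finset.sum_neg_distrib, Real.exp_sum]
  exact (summable_prod_apply_of_nonneg (fun _ _ => (Real.exp_pos _).le)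
    fun i => summable_exp_neg_mul_add_sq (half_pos hd) (s i)).mul_left _

end GaussianSums

theorem Matrix.PosDef.exists_pos_mul_sum_sq_le {n : Type*} [Fintype n] {A : Matrix n n ℝ}
    (hA : A.PosDef) : ∃ c > 0, ∀ x : n → ℝ, c * ∑ i, x i ^ 2 ≤ x ⬝ᵥ A *ᵥ x := by
  cases isEmpty_or_nonempty n
  · exact ⟨1, one_pos, fun x => by simp⟩
  set Q : EuclideanSpace ℝ n → ℝ := fun y => y.ofLp ⬝ᵥ A *ᵥ y.ofLp
  have hQ : Continuous Q := by
    have := PiLp.continuous_ofLp 2 fun _ : n => ℝ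
    simp only [Q, dotProduct, mulVec]
    fun_prop
  have hQ_smul (t : ℝ) (y) : Q (t • y) = t ^ 2 * Q y := by
    simp only [Q, WithLp.ofLp_smul, mulVec_smul, smul_dotProduct, dotProduct_smul, smul_eq_mul]
    ring
  obtain ⟨y₀, hy₀, hmin⟩ := (isCompact_sphere (0 : EuclideanSpace ℝ n) 1).exists_isMinOn
    (NormedSpace.sphere_nonempty.mpr zero_le_one) hQ.continuousOn
  have hy₀0 : y₀.ofLp ≠ 0 := fun h => by
    simp [show y₀ = 0 from (WithLp.ofLp_injective 2).eq_iff.mp (by simpa using h)] at hy₀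
  refine ⟨Q y₀, by simpa using hA.dotProduct_mulVec_pos hy₀0, fun x => ?_⟩
  set y : EuclideanSpace ℝ n := WithLp.toLp 2 x
  have hy : ‖y‖ ^ 2 = ∑ i, x i ^ 2 := by simp [y, EuclideanSpace.norm_sq_eq]
  rcases eq_or_ne y 0 with h0 | h0
  · have : x = 0 := by simpa [y] using h0
    simp [this]
  have hnorm : ‖y‖⁻¹ • y ∈ Metric.sphere (0 : EuclideanSpace ℝ n) 1 := by
    simp [norm_smul, norm_ne_zero_iff.mpr h0]
  have hle : Q y₀ ≤ ‖y‖⁻¹ ^ 2 * Q y := hQ_smul _ y ▸ hmin hnorm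
  calc Q y₀ * ∑ i, x i ^ 2 ≤ ‖y‖⁻¹ ^ 2 * Q y * ‖y‖ ^ 2 := by rw [hy]; gcongr
    _ = x ⬝ᵥ A *ᵥ x := by field_simp [norm_ne_zero_iff.mpr h0]; rfl

section ThetaSeries

variable {g : ℕ}

def halfShift (a l : Fin g → ℤ) (i : Fin g) : ℝ := l i + a i / 2

def quadForm (τ : Matrix (Fin g) (Fin g) ℂ) (x : Fin g → ℝ) : ℂ := ∑ i, ∑ j, x i * τ i j * x j

def thetaTerm (g : ℕ) (a b : Fin g → ℤ) (τ : Matrix (Fin g) (Fin g) ℂ) (l : Fin g → ℤ) : ℂ :=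
  cexp (π * I * quadForm τ (halfShift a l)) * cexp ((π * ∑ i, halfShift a l i * b i : ℝ) * I)

lemma thetaNull_eq_tsum_thetaTerm (a b : Fin g → ℤ) (τ : Matrix (Fin g) (Fin g) ℂ) :
    thetaNull g a b τ = ∑' l, thetaTerm g a b τ l := by
  refine tsum_congr fun l => ?_
  simp only [thetaTerm, quadForm, halfShift, Pi.zero_apply, zero_add]
  push_cast
  congr 2
  rw [Finset.mul_sum, Finset.mul_sum, Finset.sum_mul]
  exact Finset.sum_congr rfl fun i _ => by ring

lemma quadForm_add_smul (σ D : Matrix (Fin g) (Fin g) ℂ) (w : ℂ) (x : Fin g → ℝ) :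
    quadForm (σ + w • D) x = quadForm σ x + w * quadForm D x := by
  simp only [quadForm, Matrix.add_apply, Matrix.smul_apply, smul_eq_mul, Finset.mul_sum,
    ← Finset.sum_add_distrib]
  exact Finset.sum_congr rfl fun i _ => Finset.sum_congr rfl fun j _ => by ring

lemma im_quadForm (τ : Matrix (Fin g) (Fin g) ℂ) (x : Fin g → ℝ) :
    (quadForm τ x).im = x ⬝ᵥ (of fun i j => (τ i j).im) *ᵥ x := by
  simp only [quadForm, dotProduct, mulVec, of_apply, Complex.im_sum, Finset.mul_sum]
  refine Finset.sum_congr rfl fun i _ => Finset.sum_congr rfl fun j _ => ?_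
  simp only [Complex.mul_im, Complex.ofReal_re, Complex.ofReal_im, Complex.mul_re]
  ring

lemma norm_quadForm_le (D : Matrix (Fin g) (Fin g) ℂ) (x : Fin g → ℝ) :
    ‖quadForm D x‖ ≤ (∑ i, ∑ j, ‖D i j‖) * ∑ k, x k ^ 2 := by
  have hsq (i : Fin g) : x i ^ 2 ≤ ∑ k, x k ^ 2 :=
    Finset.single_le_sum (fun k _ => sq_nonneg (x k)) (Finset.mem_univ i)
  rw [Finset.sum_mul]
  refine (norm_sum_le _ _).trans (Finset.sum_le_sum fun i _ => ?_)
  rw [Finset.sum_mul]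
  refine (norm_sum_le _ _).trans (Finset.sum_le_sum fun j _ => ?_)
  rw [norm_mul, norm_mul, Complex.norm_real, Complex.norm_real, Real.norm_eq_abs,
    Real.norm_eq_abs, mul_comm |x i|, mul_assoc]
  gcongr
  nlinarith [sq_abs (x i), sq_abs (x j), sq_nonneg (|x i| - |x j|), hsq i, hsq j]

lemma norm_thetaTerm (a b : Fin g → ℤ) (τ : Matrix (Fin g) (Fin g) ℂ) (l : Fin g → ℤ) :
    ‖thetaTerm g a b τ l‖ = rexp (-(π * (quadForm τ (halfShift a l)).im)) := by
  rw [thetaTerm, norm_mul, Complex.norm_exp_ofReal_mul_I, mul_one, Complex.norm_exp]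
  simp [Complex.mul_re]

lemma hasDerivAt_thetaTerm_add_smul (a b : Fin g → ℤ) (σ D : Matrix (Fin g) (Fin g) ℂ)
    (l : Fin g → ℤ) (w : ℂ) :
    HasDerivAt (fun w => thetaTerm g a b (σ + w • D) l)
      (π * I * quadForm D (halfShift a l) * thetaTerm g a b (σ + w • D) l) w := by
  simp only [thetaTerm, quadForm_add_smul]
  exact ((((hasDerivAt_mul_const (quadForm D (halfShift a l))).const_add
    (quadForm σ (halfShift a l))).const_mul (π * I : ℂ)).cexp.mul_const _).congr_deriv
      (by ring)

end ThetaSeries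

section ThetaTower

variable {g : ℕ} (a b : Fin g → ℤ) (τ D E : Matrix (Fin g) (Fin g) ℂ)

def thetaTowerTerm (m n : ℕ) (u v : ℂ) (l : Fin g → ℤ) : ℂ :=
  (π * I * quadForm D (halfShift a l)) ^ m * (π * I * quadForm E (halfShift a l)) ^ n *
    thetaTerm g a b (τ + u • D + v • E) l

/-- `∂ᵤᵐ ∂ᵥⁿ θ[a; b](τ + u D + v E)`, computed termwise. -/
def thetaTower (m n : ℕ) (u v : ℂ) : ℂ := ∑' l, thetaTowerTerm a b τ D E m n u v l

lemma thetaTower_zero_zero (u v : ℂ) :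
    thetaTower a b τ D E 0 0 u v = thetaNull g a b (τ + u • D + v • E) := by
  simp [thetaTower, thetaTowerTerm, thetaNull_eq_tsum_thetaTerm]

lemma hasDerivAt_thetaTowerTerm_fst (m n : ℕ) (u v : ℂ) (l : Fin g → ℤ) :
    HasDerivAt (fun w => thetaTowerTerm a b τ D E m n w v l)
      (thetaTowerTerm a b τ D E (m + 1) n u v l) u := by
  have h := hasDerivAt_thetaTerm_add_smul a b (τ + v • E) D l u
  simp only [add_right_comm τ (v • E)] at h
  exact (h.const_mul _).congr_deriv (by simp only [thetaTowerTerm]; ring)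

lemma hasDerivAt_thetaTowerTerm_snd (m n : ℕ) (u v : ℂ) (l : Fin g → ℤ) :
    HasDerivAt (fun w => thetaTowerTerm a b τ D E m n u w l)
      (thetaTowerTerm a b τ D E m (n + 1) u v l) v :=
  ((hasDerivAt_thetaTerm_add_smul a b (τ + u • D) E l v).const_mul _).congr_deriv
    (by simp only [thetaTowerTerm]; ring)

variable {τ D E} in
lemma norm_thetaTowerTerm_le {c K r : ℝ}
    (hc : ∀ x, c * ∑ i, x i ^ 2 ≤ x ⬝ᵥ (of fun i j => (τ i j).im) *ᵥ x)
    (hD : ∀ x, ‖quadForm D x‖ ≤ K * ∑ i, x i ^ 2) (hE : ∀ x, ‖quadForm E x‖ ≤ K * ∑ i, x i ^ 2)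
    (hr : r * K ≤ c / 4) {u v : ℂ} (hu : ‖u‖ ≤ r) (hv : ‖v‖ ≤ r) (m n : ℕ) (l : Fin g → ℤ) :
    ‖thetaTowerTerm a b τ D E m n u v l‖ ≤ (π * K) ^ (m + n) *
      ((∑ i, halfShift a l i ^ 2) ^ (m + n) * rexp (-(π * c / 2 * ∑ i, halfShift a l i ^ 2))) := by
  set x := halfShift a l
  set X := ∑ i, x i ^ 2
  have hX : 0 ≤ X := by positivity
  have hfactor (F : Matrix (Fin g) (Fin g) ℂ) (hF : ‖quadForm F x‖ ≤ K * X) (k : ℕ) :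
      ‖(π * I * quadForm F x) ^ k‖ ≤ (π * K * X) ^ k := by
    rw [norm_pow, norm_mul, norm_mul, Complex.norm_real, Complex.norm_I, Real.norm_eq_abs,
      abs_of_pos Real.pi_pos, mul_one, mul_assoc]
    gcongr
  have him : c / 2 * X ≤ (quadForm (τ + u • D + v • E) x).im := by
    have hIm (w : ℂ) (F : Matrix (Fin g) (Fin g) ℂ) (hw : ‖w‖ ≤ r) (hF : ‖quadForm F x‖ ≤ K * X) :
        -(c / 4 * X) ≤ (w * quadForm F x).im := by
      have hr0 : 0 ≤ r := (norm_nonneg w).trans hw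
      calc -(c / 4 * X) ≤ -‖w * quadForm F x‖ := by
            rw [norm_mul, neg_le_neg_iff]
            nlinarith [mul_le_mul hw hF (norm_nonneg _) hr0]
        _ ≤ (w * quadForm F x).im :=
            (neg_le_neg (Complex.abs_im_le_norm _)).trans (neg_abs_le _)
    rw [quadForm_add_smul, quadForm_add_smul, Complex.add_im, Complex.add_im, im_quadForm]
    linarith [hc x, hIm u D hu (hD x), hIm v E hv (hE x)]
  calc ‖thetaTowerTerm a b τ D E m n u v l‖
      ≤ (π * K * X) ^ m * (π * K * X) ^ n * rexp (-(π * c / 2 * X)) := by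
        have hDm := hfactor D (hD x) m
        have hEn := hfactor E (hE x) n
        have hexp : rexp (-(π * (quadForm (τ + u • D + v • E) x).im)) ≤ rexp (-(π * c / 2 * X)) :=
          Real.exp_le_exp.mpr (by nlinarith [Real.pi_pos])
        rw [thetaTowerTerm, norm_mul, norm_mul, norm_thetaTerm]
        exact mul_le_mul (mul_le_mul hDm hEn (norm_nonneg _) ((norm_nonneg _).trans hDm)) hexp
          (Real.exp_pos _).le (mul_nonneg ((norm_nonneg _).trans hDm) ((norm_nonneg _).trans hEn))
    _ = (π * K) ^ (m + n) * (X ^ (m + n) * rexp (-(π * c / 2 * X))) := by ring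

end ThetaTower

theorem exists_isDerivTower_thetaTower {g : ℕ} {τ : Matrix (Fin g) (Fin g) ℂ}
    (hτ : (of fun i j => (τ i j).im).PosDef) (D E : Matrix (Fin g) (Fin g) ℂ) :
    ∃ r > 0, ∀ a b, IsDerivTower (thetaTower a b τ D E) r := by
  obtain ⟨c, hc0, hc⟩ := hτ.exists_pos_mul_sum_sq_le
  set K := ∑ i, ∑ j, ‖D i j‖ + ∑ i, ∑ j, ‖E i j‖
  have hD x : ‖quadForm D x‖ ≤ K * ∑ i, x i ^ 2 :=
    (norm_quadForm_le D x).trans (by gcongr; exact le_add_of_nonneg_right (by positivity))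
  have hE x : ‖quadForm E x‖ ≤ K * ∑ i, x i ^ 2 :=
    (norm_quadForm_le E x).trans (by gcongr; exact le_add_of_nonneg_left (by positivity))
  set r := c / (4 * (K + 1))
  have hr : 0 < r := by positivity
  have hrK : r * K ≤ c / 4 := by
    rw [div_mul_eq_mul_div, div_le_div_iff₀ (by positivity) (by norm_num)]
    nlinarith
  refine ⟨r, hr, fun a b => ?_⟩
  have hmajorant (k : ℕ) := (summable_pow_mul_exp_neg_mul_sum_sq (fun i => (a i : ℝ) / 2)
    (d := π * c / 2) (by positivity) k).mul_left ((π * K) ^ k)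
  have hbound {m n u v} (hu : u ∈ Metric.ball (0 : ℂ) r) (hv : v ∈ Metric.ball (0 : ℂ) r) l :=
    norm_thetaTowerTerm_le a b hc hD hE hrK (mem_ball_zero_iff.mp hu).le
      (mem_ball_zero_iff.mp hv).le m n l
  constructor
  · intro m n u v hu hv
    rw [← mem_ball_zero_iff] at hu hv
    exact hasDerivAt_tsum_of_isPreconnected (hmajorant (m + 1 + n)) Metric.isOpen_ball
      (convex_ball 0 r).isPreconnected (fun l w _ => hasDerivAt_thetaTowerTerm_fst a b τ D E m n w v l)
      (fun l w hw => hbound hw hv l) hu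
      ((hmajorant (m + n)).of_norm_bounded (hbound hu hv)) hu
  · intro m n u v hu hv
    rw [← mem_ball_zero_iff] at hu hv
    exact hasDerivAt_tsum_of_isPreconnected (hmajorant (m + (n + 1))) Metric.isOpen_ball
      (convex_ball 0 r).isPreconnected (fun l w _ => hasDerivAt_thetaTowerTerm_snd a b τ D E m n u w l)
      (fun l w hw => hbound hu hw l) hv
      ((hmajorant (m + n)).of_norm_bounded (hbound hu hv)) hv

section OddCharacteristic

variable {g : ℕ} {τ : Matrix (Fin g) (Fin g) ℂ} {k : Fin g}

lemma quadForm_update_neg (hτ : ∀ j ≠ k, τ j k = 0 ∧ τ k j = 0) (x : Fin g → ℝ) :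
    quadForm τ (Function.update x k (-x k)) = quadForm τ x := by
  refine Finset.sum_congr rfl fun i _ => Finset.sum_congr rfl fun j _ => ?_
  by_cases hi : i = k <;> by_cases hj : j = k
  · subst hi hj; simp
  · subst hi; simp [hj, (hτ j hj).2]
  · subst hj; simp [hi, (hτ i hi).1]
  · simp [hi, hj]

lemma sum_update_neg_mul (x : Fin g → ℝ) (c : Fin g → ℝ) :
    ∑ i, Function.update x k (-x k) i * c i = ∑ i, x i * c i - 2 * (x k * c k) := by
  have h (i : Fin g) : Function.update x k (-x k) i * c i =
      x i * c i - if i = k then 2 * (x k * c k) else 0 := by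
    by_cases hi : i = k
    · subst hi; simp; ring
    · simp [hi]
  simp [h, Finset.sum_sub_distrib]

variable {a b : Fin g → ℤ}

/-- `l_k ↦ -l_k - 1` is the reflection `l_k + 1/2 ↦ -(l_k + 1/2)`. -/
lemma thetaTerm_update_neg_sub_one (hτ : ∀ j ≠ k, τ j k = 0 ∧ τ k j = 0) (ha : a k = 1)
    (hb : b k = 1) (l : Fin g → ℤ) :
    thetaTerm g a b τ (Function.update l k (-l k - 1)) = -thetaTerm g a b τ l := by
  have hshift : halfShift a (Function.update l k (-l k - 1)) =
      Function.update (halfShift a l) k (-halfShift a l k) := by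
    funext i
    by_cases hi : i = k
    · subst hi; simp [halfShift, ha]; ring
    · simp [halfShift, hi]
  have hphase : ((π * (∑ i, halfShift a l i * b i - 2 * (halfShift a l k * b k)) : ℝ) : ℂ) * I =
      (π * ∑ i, halfShift a l i * b i : ℝ) * I + (-l k : ℤ) * (2 * π * I) + -(π * I) := by
    simp only [halfShift, ha, hb]
    push_cast
    ring
  rw [thetaTerm, thetaTerm, hshift, quadForm_update_neg hτ, sum_update_neg_mul, hphase,
    Complex.exp_add, Complex.exp_add, Complex.exp_int_mul_two_pi_mul_I, Complex.exp_neg,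
    Complex.exp_pi_mul_I]
  ring

theorem thetaNull_eq_zero_of_odd (hτ : ∀ j ≠ k, τ j k = 0 ∧ τ k j = 0) (ha : a k = 1)
    (hb : b k = 1) : thetaNull g a b τ = 0 := by
  have hρ : Function.Involutive fun l : Fin g → ℤ => Function.update l k (-l k - 1) :=
    fun l => by simp
  rw [thetaNull_eq_tsum_thetaTerm, ← self_eq_neg, ← tsum_neg,
    ← (hρ.toPerm _).tsum_eq (thetaTerm g a b τ)]
  exact tsum_congr fun l => thetaTerm_update_neg_sub_one hτ ha hb l

end OddCharacteristic

def evenChars : Finset ((Fin 3 → Fin 2) × (Fin 3 → Fin 2)) :=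
  Finset.univ.filter fun ch => Even (∑ i, (ch.1 i : ℕ) * (ch.2 i : ℕ))

def intChar (a : Fin 3 → Fin 2) : Fin 3 → ℤ := fun i => ((a i : ℕ) : ℤ)

lemma chi18_eq_prod_evenChars (σ : Matrix (Fin 3) (Fin 3) ℂ) :
    chi18 σ = ∏ ch ∈ evenChars, thetaNull 3 (intChar ch.1) (intChar ch.2) σ := by
  rw [chi18, evenChars, Finset.prod_filter, ← Finset.univ_product_univ, Finset.prod_product]
  rfl

def oddThirdChars : Finset ((Fin 3 → Fin 2) × (Fin 3 → Fin 2)) :=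
  evenChars.filter fun ch => ch.1 2 = 1 ∧ ch.2 2 = 1

lemma card_oddThirdChars : oddThirdChars.card = 6 := by decide

/-- `χ₁₈` vanishes to order at least 6 along the locus of decomposable period matrices. -/
theorem statement_12 (τ : Matrix (Fin 3) (Fin 3) ℂ) (hτ : τ ∈ Hg 3)
    (h13 : τ 0 2 = 0) (h23 : τ 1 2 = 0) (p q : ℕ) (hpq : p + q ≤ 5) :
    (mdOp 0 2)^[p] ((mdOp 1 2)^[q] chi18) τ = 0 := by
  obtain ⟨hsym, hpos⟩ := hτ
  obtain ⟨r, hr, htower⟩ := exists_isDerivTower_thetaTower hpos (symmUnit 0 2) (symmUnit 1 2)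
  have hblock (j : Fin 3) (hj : j ≠ 2) : τ j 2 = 0 ∧ τ 2 j = 0 := by
    fin_cases j <;> simp_all [hsym.apply]
  have hodd : ∀ ch ∈ oddThirdChars,
      thetaTower (intChar ch.1) (intChar ch.2) τ (symmUnit 0 2) (symmUnit 1 2) 0 0 0 0 = 0 := by
    intro ch hch
    rw [oddThirdChars, Finset.mem_filter] at hch
    rw [thetaTower_zero_zero, zero_smul, zero_smul, add_zero, add_zero]
    exact thetaNull_eq_zero_of_odd hblock (by simp [intChar, hch.2.1]) (by simp [intChar, hch.2.2])
  simp only [mdOp_iterate_apply, chi18_eq_prod_evenChars, ← thetaTower_zero_zero]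
  exact iteratedDeriv_iteratedDeriv_prod_eq_zero (s := evenChars) (Z := oddThirdChars)
    (fun _ _ => htower _ _) hr (Finset.filter_subset _ _) hodd (by rw [card_oddThirdChars]; omega)
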